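/- Let f: ℝ → ℝ be the function t ↦ maxroot ψ_{k,m}[A + t·vv*] for a Hermitian matrix A ∈ ℂ^{km×km} and a nonzero vector v ∈ ℂ^{km}. Then f is continuous and monotone nondecreasing on ℝ. -/

import Mathlib

open Polynomial

/-- The `(k,m)`-characteristic polynomial, with `k`-partitions of `[m]` encoded as
functions `g : Fin m → Fin k`. -/
noncomputable def psiCharPoly (k m : ℕ)
    (A : Matrix (Fin k × Fin m) (Fin k × Fin m) ℂ) : Polynomial ℂ :=
  ((k : ℂ) ^ m)⁻¹ •
    ∑ g : Fin m → Fin k,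
      (A.submatrix (fun i : Fin m => (g i, i)) (fun i : Fin m => (g i, i))).charpoly

/-- The largest (real) root of a real-rooted polynomial over `ℂ`. -/
noncomputable def maxRoot (p : Polynomial ℂ) : ℝ :=
  sSup {x : ℝ | p.eval (x : ℂ) = 0}

/-!
Up to the factor `k⁻ᵐ`, `ψ_{k,m}[B](x)` is the sum of the principal minors of `x • 1 - B` on the
transversals of the blocks `Fin k × {i}`. If `B` is Hermitian and `x` is not real, the imaginary
part of `±(x • 1 - B)` is positive definite, and then such a sum does not vanish. By induction on
the number of blocks taken transversally: adding `y` to the diagonal of one block kept whole gives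
a polynomial in `y` of degree `k`, whose leading coefficient is the sum with that block left out
and whose next coefficient is `k` times the sum with that block taken transversally. Its roots lie
in `Im y < 0`, since for `Im y ≥ 0` the imaginary part stays positive definite; so their sum, and
with it the next coefficient, is nonzero.

Hence each `ψ_{k,m}[A + t • vv*]` is real-rooted, and being affine in `t` it is `P - t Φ` for real
polynomials, `P` monic of degree `m` and `Φ` of degree `m - 1` with positive leading coefficient
(a trace). Let `r t` be the largest root of `P - t Φ`. For `x ≥ r t` we have
`(x - r t) ^ m ≤ (P - t Φ)(x)`, while `(P - t Φ)(r s) = (s - t) Φ(r s)`; with a local bound on the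
roots this gives continuity. A point `x` with `Φ x ≠ 0` is a root of `P - t Φ` for only one `t`,
and `r` is unbounded above, so by the intermediate value theorem a continuous `r` that decreased
somewhere would reach such an `x` twice.
-/

open Matrix Finset
open scoped ComplexStarModule ComplexOrder

namespace Matrix

section RankOne

variable {n R : Type*} [Fintype n] [DecidableEq n] [CommRing R]

theorem det_add_smul_vecMulVec (M : Matrix n n R) (u w : n → R) (r : R) :
    (M + r • vecMulVec u w).det = M.det + r * ((M + vecMulVec u w).det - M.det) := by
  -- `M + vecMulVec c w` is a Schur complement of a bordered matrix whose last column is `(c, 1)`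
  let B : (n → R) → Matrix (n ⊕ Unit) (n ⊕ Unit) R := fun c =>
    fromBlocks M (replicateCol Unit c) (replicateRow Unit (-w)) 1
  have hB : ∀ c, (B c).det = (M + vecMulVec c w).det := fun c => by
    rw [det_fromBlocks_one₂₂, vecMulVec_eq Unit]
    congr 1
    ext i j
    simp [Matrix.mul_apply]
  have hcol : ∀ c, B c = (B 0).updateCol (Sum.inr ()) (Sum.elim c 1) := fun c => by
    ext (i | i) (j | j) <;> simp [B]
  have hsplit : Sum.elim (r • u) (1 : Unit → R)
      = r • Sum.elim u 1 + (1 - r) • Sum.elim (0 : n → R) 1 := by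
    ext (i | i) <;> simp
  have h0 : M.det = (B 0).det := by rw [hB, zero_vecMulVec, add_zero]
  rw [← smul_vecMulVec, ← hB, ← hB u, h0, hcol (r • u), hsplit, det_updateCol_add,
    det_updateCol_smul, det_updateCol_smul, ← hcol, ← hcol]
  ring

theorem charpoly_add_smul_vecMulVec (M : Matrix n n R) (u w : n → R) (r : R) :
    (M + r • vecMulVec u w).charpoly
      = M.charpoly + r • ((M + vecMulVec u w).charpoly - M.charpoly) := by
  have hchar : ∀ s : R, charmatrix (M + s • vecMulVec u w)
      = charmatrix M + C s • vecMulVec (fun i => -C (u i)) fun j => C (w j) := fun s => by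
    ext i j
    by_cases hij : i = j
    · subst hij; simp [vecMulVec_apply]; ring
    · simp [vecMulVec_apply, hij]; ring
  have hchar₁ := hchar 1
  rw [one_smul, map_one, one_smul] at hchar₁
  rw [charpoly, charpoly, charpoly, hchar, hchar₁, det_add_smul_vecMulVec, smul_eq_C_mul]

end RankOne

section PrincipalMinor

variable {n R : Type*} [DecidableEq n] [CommRing R]

def principalMinor (M : Matrix n n R) (S : Finset n) : R :=
  (M.submatrix ((↑) : S → n) (↑)).det

theorem principalMinor_eq_det_submatrix {m : Type*} [Fintype m] [DecidableEq m]
    (M : Matrix n n R) {S : Finset n} (e : m ≃ S) :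
    M.principalMinor S = (M.submatrix (fun i => (e i : n)) fun i => e i).det := by
  rw [principalMinor, ← det_submatrix_equiv_self e]
  rfl

theorem principalMinor_neg (M : Matrix n n R) (S : Finset n) :
    (-M).principalMinor S = (-1) ^ #S * M.principalMinor S := by
  rw [principalMinor, principalMinor, ← Fintype.card_coe, ← det_neg]
  rfl

variable [Fintype n]

theorem principalMinor_eq_det_piecewise (M : Matrix n n R) (S : Finset n) :
    M.principalMinor S = (of (S.piecewise M.row (1 : Matrix n n R).row)).det :=
  (det_piecewise_one_eq_submatrix_det M S).symm

theorem principalMinor_insert_add_smul_diagonal_single (K : Matrix n n R) {a : n}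
    {T : Finset n} (ha : a ∉ T) (y : R) :
    (K + y • diagonal (Pi.single a 1)).principalMinor (insert a T)
      = K.principalMinor (insert a T) + y * K.principalMinor T := by
  simp only [principalMinor_eq_det_piecewise]
  set X := of ((insert a T).piecewise K.row (1 : Matrix n n R).row)
  have hperturbed :
      of ((insert a T).piecewise (K + y • diagonal (Pi.single a 1)).row (1 : Matrix n n R).row)
        = X.updateRow a (X a + y • (1 : Matrix n n R) a) := by
    ext i j
    by_cases hi : i = a
    · subst hi; simp [X, Finset.piecewise, row, one_apply, diagonal_apply]
    · simp only [X, Finset.piecewise, row, updateRow_ne hi, of_apply, mem_insert, hi, false_or]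
      split_ifs <;> simp [diagonal_apply, hi]
  have hdropped : X.updateRow a ((1 : Matrix n n R) a)
      = of (T.piecewise K.row (1 : Matrix n n R).row) := by
    ext i j
    by_cases hi : i = a
    · subst hi; simp [ha, Finset.piecewise, row]
    · simp [X, Finset.piecewise, hi, row]
  rw [hperturbed, det_updateRow_add, det_updateRow_smul, updateRow_eq_self, hdropped]

theorem principalMinor_union_add_smul_diagonal (M : Matrix n n R) {S C : Finset n}
    (hSC : Disjoint S C) (y : R) :
    (M + y • diagonal fun i => if i ∈ C then 1 else 0).principalMinor (S ∪ C)
      = ∑ V ∈ C.powerset, y ^ (#C - #V) * M.principalMinor (S ∪ V) := by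
  induction C using Finset.induction_on generalizing S with
  | empty => simp
  | @insert a C haC ih =>
    rw [Finset.disjoint_insert_right] at hSC
    have hdiag : (diagonal fun i => if i ∈ insert a C then (1 : R) else 0)
        = (diagonal fun i => if i ∈ C then 1 else 0) + diagonal (Pi.single a 1) := by
      rw [diagonal_add]
      congr 1
      ext i
      by_cases hi : i = a
      · subst hi; simp [haC]
      · simp [hi]
    have hSa : a ∉ S ∪ C := by simp [hSC.1, haC]
    rw [hdiag, smul_add, ← add_assoc, Finset.union_insert,
      principalMinor_insert_add_smul_diagonal_single _ hSa, ← Finset.insert_union, ih, ih hSC.2,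
      Finset.sum_powerset_insert haC, Finset.mul_sum, add_comm]
    congr 1
    · refine Finset.sum_congr rfl fun V hV => ?_
      rw [card_insert_of_notMem haC, Nat.sub_add_comm (card_le_card (mem_powerset.mp hV))]
      ring
    · refine Finset.sum_congr rfl fun V hV => ?_
      have haV : a ∉ V := fun h => haC (mem_powerset.mp hV h)
      rw [card_insert_of_notMem haC, card_insert_of_notMem haV, Nat.add_sub_add_right,
        Finset.union_insert, Finset.insert_union]
    · simpa [Finset.disjoint_insert_left] using ⟨haC, hSC.2⟩

end PrincipalMinor

section ImaginaryPart

theorem imaginaryPart_submatrix {n m : Type*} (M : Matrix n n ℂ) (e : m → n) :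
    (ℑ (M.submatrix e e) : Matrix m m ℂ) = (ℑ M : Matrix n n ℂ).submatrix e e := by
  simp [imaginaryPart_apply_coe, star_eq_conjTranspose, conjTranspose_submatrix]
  rfl

theorem det_ne_zero_of_posDef_imaginaryPart {n : Type*} [Fintype n] [DecidableEq n]
    {M : Matrix n n ℂ} (hM : (ℑ M : Matrix n n ℂ).PosDef) : M.det ≠ 0 := by
  intro h
  obtain ⟨v, hv, hMv⟩ := exists_mulVec_eq_zero_iff.mpr h
  have hadj : star v ⬝ᵥ (Mᴴ *ᵥ v) = 0 := by
    rw [dotProduct_mulVec, ← star_mulVec, hMv, star_zero, zero_dotProduct]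
  have := hM.dotProduct_mulVec_pos hv
  rw [imaginaryPart_apply_coe, star_eq_conjTranspose, smul_mulVec, smul_mulVec, sub_mulVec, hMv,
    zero_sub, dotProduct_smul, dotProduct_smul, dotProduct_neg, hadj] at this
  simp at this

variable {n : Type*} [DecidableEq n]

theorem principalMinor_ne_zero_of_posDef_imaginaryPart {M : Matrix n n ℂ}
    (hM : (ℑ M : Matrix n n ℂ).PosDef) (S : Finset n) : M.principalMinor S ≠ 0 := by
  refine det_ne_zero_of_posDef_imaginaryPart ?_
  rw [imaginaryPart_submatrix]
  exact hM.submatrix Subtype.val_injective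

theorem posDef_imaginaryPart_smul_one_sub {B : Matrix n n ℂ} (hB : B.IsHermitian) {x : ℂ}
    (hx : 0 < x.im) : (ℑ (x • 1 - B) : Matrix n n ℂ).PosDef := by
  have h1 := (isHermitian_one (n := n) (α := ℂ)).isSelfAdjoint
  rw [map_sub, hB.isSelfAdjoint.imaginaryPart, sub_zero, imaginaryPart_smul, h1.imaginaryPart]
  simpa [h1.coe_realPart] using (PosDef.one (n := n) (R := ℂ)).smul hx

theorem posDef_imaginaryPart_add_smul_diagonal {M : Matrix n n ℂ}
    (hM : (ℑ M : Matrix n n ℂ).PosDef) {y : ℂ} (hy : 0 ≤ y.im) (C : Finset n) :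
    (ℑ (M + y • diagonal fun i => if i ∈ C then 1 else 0) : Matrix n n ℂ).PosDef := by
  have hD : IsSelfAdjoint (diagonal fun i => if i ∈ C then (1 : ℂ) else 0) :=
    isHermitian_diagonal_of_self_adjoint _ (by ext i; split_ifs <;> simp [*])
  rw [map_add, imaginaryPart_smul, hD.imaginaryPart]
  simp only [smul_zero, zero_add, AddSubgroup.coe_add, selfAdjoint.val_smul, hD.coe_realPart]
  refine hM.add_posSemidef (PosSemidef.smul (.diagonal fun i => ?_) hy)
  split_ifs <;> simp

end ImaginaryPart

end Matrix

namespace Polynomial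

theorem nextCoeff_ne_zero_of_forall_isRoot_im_neg {p : ℂ[X]} (hp : 0 < p.natDegree)
    (h : ∀ z, p.IsRoot z → z.im < 0) : p.nextCoeff ≠ 0 := by
  have hp0 : p ≠ 0 := ne_zero_of_natDegree_gt hp
  rw [(IsAlgClosed.splits p).nextCoeff_eq_neg_sum_roots_mul_leadingCoeff, neg_mul, neg_ne_zero]
  refine mul_ne_zero (leadingCoeff_ne_zero.mpr hp0) fun hsum => ?_
  have hroots : p.roots ≠ 0 := by
    rw [← Multiset.card_pos, ← (IsAlgClosed.splits p).natDegree_eq_card_roots]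
    exact hp
  have := Multiset.sum_lt_sum_of_nonempty hroots fun z hz => h z ((mem_roots hp0).mp hz)
  rw [Multiset.map_const', Multiset.sum_replicate, smul_zero, ← Complex.coe_imAddGroupHom,
    ← map_multiset_sum, hsum, map_zero] at this
  exact this.false

theorem coeff_sum_powerset_C_mul_X_pow {ι R : Type*} [CommRing R] (s : Finset ι)
    (f : Finset ι → R) {j : ℕ} (hj : j ≤ #s) :
    (∑ V ∈ s.powerset, C (f V) * X ^ (#s - #V)).coeff j
      = ∑ V ∈ s.powersetCard (#s - j), f V := by
  simp only [finsetSum_coeff, coeff_C_mul_X_pow]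
  rw [powersetCard_eq_filter, sum_filter]
  refine sum_congr rfl fun V hV => ?_
  have := card_le_card (mem_powerset.mp hV)
  congr 1
  apply propext
  omega

theorem IsMonicOfDegree.of_map {K L : Type*} [Field K] [Semiring L] [Nontrivial L] {f : K →+* L}
    {p : K[X]} {n : ℕ} (h : (p.map f).IsMonicOfDegree n) : p.IsMonicOfDegree n :=
  ⟨by rw [← natDegree_map f, h.natDegree_eq], monic_map_iff.mp h.monic⟩

theorem exists_splits_map_eq {p : ℂ[X]} (hp : p.Monic) (hroots : ∀ z, p.IsRoot z → z.im = 0) :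
    ∃ q : ℝ[X], q.Splits ∧ q.map (algebraMap ℝ ℂ) = p := by
  have hreal : ∀ z ∈ p.roots, z ∈ (algebraMap ℝ ℂ).range := fun z hz =>
    ⟨z.re, Complex.ext (by simp) (by simp [hroots z ((mem_roots hp.ne_zero).mp hz)])⟩
  obtain ⟨q, rfl⟩ := mem_lifts _ |>.mp <|
    (IsAlgClosed.splits p).mem_lift_of_roots_mem_range hp _ hreal
  exact ⟨q, (IsAlgClosed.splits _).of_splits_map_of_injective (RingHom.injective _) hreal, rfl⟩

end Polynomial

namespace Matrix

section Blocks

variable {α β R : Type*} [Fintype α] [CommRing R]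

def block (α : Type*) [Fintype α] (b : β) : Finset (α × β) := univ.map (.sectL α b)

theorem mem_block {b : β} {p : α × β} : p ∈ block α b ↔ p.2 = b := by
  simp [block, Prod.ext_iff, eq_comm]

theorem card_block (b : β) : #(block α b) = Fintype.card α := by simp [block]

variable [Fintype β] [DecidableEq β]

theorem sum_sum_update (c : β) (f : (β → α) → R) :
    ∑ g : β → α, ∑ j : α, f (Function.update g c j) = Fintype.card α • ∑ g, f g := by
  let e : Equiv.Perm ((β → α) × α) :=
    Function.Involutive.toPerm (fun q => (Function.update q.1 c q.2, q.1 c)) fun q => by simp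
  calc ∑ g : β → α, ∑ j : α, f (Function.update g c j) = ∑ q, f (e q).1 :=
        (Fintype.sum_prod_type' _).symm
    _ = ∑ q : (β → α) × α, f q.1 := Equiv.sum_comp e fun q => f q.1
    _ = Fintype.card α • ∑ g, f g := by simp [Fintype.sum_prod_type, smul_sum]

variable [DecidableEq α]

/-- The indices of the blocks in `F`, together with the index chosen by `g` in each block of
`T`; the other blocks are left out. -/
def blockSelection (F T : Finset β) (g : β → α) : Finset (α × β) :=
  {p | p.2 ∈ F ∨ p.2 ∈ T ∧ p.1 = g p.2}

theorem blockSelection_insert_left (F T : Finset β) (g : β → α) (c : β) :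
    blockSelection (insert c F) T g = blockSelection F T g ∪ block α c := by
  ext p
  simp [blockSelection, mem_block]
  tauto

theorem disjoint_blockSelection_block {F T : Finset β} {c : β} (hcF : c ∉ F) (hcT : c ∉ T)
    (g : β → α) : Disjoint (blockSelection F T g) (block α c) := by
  rw [Finset.disjoint_left]
  rintro p hp hpc
  rw [mem_block] at hpc
  simp [blockSelection, hpc, hcF, hcT] at hp

theorem blockSelection_union_singleton {F T : Finset β} {c : β} (hcF : c ∉ F) (hcT : c ∉ T)
    (g : β → α) (j : α) :
    blockSelection F T g ∪ {(j, c)} = blockSelection F (insert c T) (Function.update g c j) := by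
  ext ⟨a, b⟩
  by_cases hb : b = c
  · subst hb
    simp [blockSelection, hcF, hcT]
  · simp [blockSelection, hb]

def blockMinorSum (F T : Finset β) (M : Matrix (α × β) (α × β) R) : R :=
  ∑ g : β → α, M.principalMinor (blockSelection F T g)

noncomputable def blockMinorPolynomial (F T : Finset β) (c : β)
    (M : Matrix (α × β) (α × β) R) : R[X] :=
  ∑ g : β → α, ∑ V ∈ (block α c).powerset,
    C (M.principalMinor (blockSelection F T g ∪ V)) * X ^ (#(block α c) - #V)

theorem eval_blockMinorPolynomial {F T : Finset β} {c : β} (hcF : c ∉ F) (hcT : c ∉ T)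
    (M : Matrix (α × β) (α × β) R) (y : R) :
    (blockMinorPolynomial F T c M).eval y = blockMinorSum (insert c F) T
      (M + y • diagonal fun i => if i ∈ block α c then 1 else 0) := by
  simp only [blockMinorPolynomial, blockMinorSum, eval_finsetSum, eval_mul, eval_C, eval_pow,
    eval_X, blockSelection_insert_left,
    principalMinor_union_add_smul_diagonal _ (disjoint_blockSelection_block hcF hcT _), mul_comm]

theorem natDegree_blockMinorPolynomial_le (F T : Finset β) (c : β)
    (M : Matrix (α × β) (α × β) R) :
    (blockMinorPolynomial F T c M).natDegree ≤ Fintype.card α := by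
  refine natDegree_sum_le_of_forall_le _ _ fun g _ =>
    natDegree_sum_le_of_forall_le _ _ fun V _ => (natDegree_C_mul_X_pow_le _ _).trans ?_
  rw [card_block]
  exact Nat.sub_le _ _

theorem coeff_blockMinorPolynomial_card (F T : Finset β) (c : β)
    (M : Matrix (α × β) (α × β) R) :
    (blockMinorPolynomial F T c M).coeff (Fintype.card α) = blockMinorSum F T M := by
  rw [blockMinorPolynomial, finsetSum_coeff, blockMinorSum]
  refine sum_congr rfl fun g _ => ?_
  rw [coeff_sum_powerset_C_mul_X_pow _ _ (card_block c).ge, card_block, Nat.sub_self]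
  simp

theorem coeff_blockMinorPolynomial_card_sub_one [Nonempty α] {F T : Finset β} {c : β}
    (hcF : c ∉ F) (hcT : c ∉ T) (M : Matrix (α × β) (α × β) R) :
    (blockMinorPolynomial F T c M).coeff (Fintype.card α - 1)
      = Fintype.card α • blockMinorSum F (insert c T) M := by
  rw [blockMinorPolynomial, finsetSum_coeff, blockMinorSum,
    ← sum_sum_update c fun g => M.principalMinor (blockSelection F (insert c T) g)]
  refine sum_congr rfl fun g _ => ?_
  rw [coeff_sum_powerset_C_mul_X_pow _ _ ((card_block c).ge.trans' (Nat.sub_le _ _)),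
    card_block, Nat.sub_sub_self Fintype.card_pos, powersetCard_one, sum_map, block, sum_map]
  simp [blockSelection_union_singleton hcF hcT]

theorem blockMinorSum_ne_zero [Nonempty α] {F T : Finset β} (hFT : Disjoint F T)
    {M : Matrix (α × β) (α × β) ℂ}
    (hM : (ℑ M : Matrix (α × β) (α × β) ℂ).PosDef) :
    blockMinorSum F T M ≠ 0 := by
  induction T using Finset.induction_on generalizing F M with
  | empty =>
    have hsel : ∀ g : β → α, blockSelection F ∅ g = ({p | p.2 ∈ F} : Finset (α × β)) :=
      fun g => by ext p; simp [blockSelection]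
    simp only [blockMinorSum, hsel, sum_const, card_univ, nsmul_eq_mul]
    exact mul_ne_zero (Nat.cast_ne_zero.mpr Fintype.card_ne_zero)
      (principalMinor_ne_zero_of_posDef_imaginaryPart hM _)
  | @insert c T hcT ih =>
    obtain ⟨hcF, hFT⟩ := disjoint_insert_right.mp hFT
    set Ψ := blockMinorPolynomial F T c M
    have hlead : Ψ.coeff (Fintype.card α) ≠ 0 := by
      rw [coeff_blockMinorPolynomial_card]
      exact ih hFT hM
    have hdeg : Ψ.natDegree = Fintype.card α :=
      (natDegree_blockMinorPolynomial_le F T c M).antisymm (le_natDegree_of_ne_zero hlead)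
    have hroots : ∀ z, Ψ.IsRoot z → z.im < 0 := by
      intro z hz
      by_contra! hz'
      rw [IsRoot, eval_blockMinorPolynomial hcF hcT] at hz
      exact ih (disjoint_insert_left.mpr ⟨hcT, hFT⟩)
        (posDef_imaginaryPart_add_smul_diagonal hM hz' _) hz
    have hnext := nextCoeff_ne_zero_of_forall_isRoot_im_neg (hdeg ▸ Fintype.card_pos) hroots
    rw [nextCoeff_of_natDegree_pos (hdeg ▸ Fintype.card_pos), hdeg,
      coeff_blockMinorPolynomial_card_sub_one hcF hcT, nsmul_eq_mul] at hnext
    exact right_ne_zero_of_mul hnext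

def transversalEquiv (g : β → α) : β ≃ blockSelection ∅ univ g where
  toFun b := ⟨(g b, b), by simp [blockSelection]⟩
  invFun p := p.1.2
  left_inv _ := rfl
  right_inv p := Subtype.ext <| Prod.ext (by simpa [blockSelection, eq_comm] using p.2) rfl

theorem blockMinorSum_empty_univ_neg (M : Matrix (α × β) (α × β) R) :
    blockMinorSum ∅ univ (-M) = (-1) ^ Fintype.card β * blockMinorSum ∅ univ M := by
  simp only [blockMinorSum, principalMinor_neg, mul_sum]
  refine sum_congr rfl fun g _ => ?_
  rw [← Fintype.card_coe, Fintype.card_congr (transversalEquiv g).symm]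

theorem blockMinorSum_smul_one_sub_ne_zero [Nonempty α] {B : Matrix (α × β) (α × β) ℂ}
    (hB : B.IsHermitian) {x : ℂ} (hx : x.im ≠ 0) :
    blockMinorSum ∅ univ (x • 1 - B) ≠ 0 := by
  rcases hx.lt_or_gt with hx | hx
  · have hneg : x • 1 - B = -((-x) • 1 - (-B)) := by
      rw [neg_smul]
      abel
    rw [hneg, blockMinorSum_empty_univ_neg]
    exact mul_ne_zero (pow_ne_zero _ (by norm_num)) (blockMinorSum_ne_zero
      (disjoint_empty_left _) (posDef_imaginaryPart_smul_one_sub hB.neg (by simpa using hx)))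
  · exact blockMinorSum_ne_zero (disjoint_empty_left _) (posDef_imaginaryPart_smul_one_sub hB hx)

end Blocks

end Matrix

section PsiCharPoly

variable {k m : ℕ}

theorem eval_psiCharPoly (A : Matrix (Fin k × Fin m) (Fin k × Fin m) ℂ) (x : ℂ) :
    (psiCharPoly k m A).eval x = ((k : ℂ) ^ m)⁻¹ * blockMinorSum ∅ univ (x • 1 - A) := by
  simp only [psiCharPoly, eval_smul, eval_finsetSum, eval_charpoly, smul_eq_mul, blockMinorSum]
  congr 1
  refine sum_congr rfl fun g _ => ?_
  rw [principalMinor_eq_det_submatrix _ (transversalEquiv g)]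
  congr 1
  ext i j
  by_cases hij : i = j
  · simp [transversalEquiv, hij]
  · simp [transversalEquiv, hij, one_apply]

theorem eval_psiCharPoly_ne_zero (hk : 0 < k) {A : Matrix (Fin k × Fin m) (Fin k × Fin m) ℂ}
    (hA : A.IsHermitian) {x : ℂ} (hx : x.im ≠ 0) : (psiCharPoly k m A).eval x ≠ 0 := by
  have : Nonempty (Fin k) := ⟨⟨0, hk⟩⟩
  rw [eval_psiCharPoly]
  exact mul_ne_zero (inv_ne_zero (pow_ne_zero _ (Nat.cast_ne_zero.mpr hk.ne')))
    (blockMinorSum_smul_one_sub_ne_zero hA hx)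

theorem coeff_psiCharPoly_self (hk : 0 < k) (A : Matrix (Fin k × Fin m) (Fin k × Fin m) ℂ) :
    (psiCharPoly k m A).coeff m = 1 := by
  have hcoeff : ∀ g : Fin m → Fin k,
      (A.submatrix (fun i => (g i, i)) fun i => (g i, i)).charpoly.coeff m = 1 := fun g => by
    have := (charpoly_monic (A.submatrix (fun i => (g i, i)) fun i => (g i, i))).coeff_natDegree
    rwa [charpoly_natDegree_eq_dim, Fintype.card_fin] at this
  simp only [psiCharPoly, coeff_smul, finsetSum_coeff, hcoeff, sum_const, card_univ,
    Fintype.card_fun, Fintype.card_fin, smul_eq_mul, nsmul_eq_mul, mul_one, Nat.cast_pow]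
  exact inv_mul_cancel₀ (pow_ne_zero _ (Nat.cast_ne_zero.mpr hk.ne'))

theorem isMonicOfDegree_psiCharPoly (hk : 0 < k)
    (A : Matrix (Fin k × Fin m) (Fin k × Fin m) ℂ) : (psiCharPoly k m A).IsMonicOfDegree m := by
  have hle : (psiCharPoly k m A).natDegree ≤ m :=
    (natDegree_smul_le _ _).trans <| natDegree_sum_le_of_forall_le _ _ fun g _ => by
      rw [charpoly_natDegree_eq_dim, Fintype.card_fin]
  have hcoeff := coeff_psiCharPoly_self hk A
  exact ⟨hle.antisymm (le_natDegree_of_ne_zero (by rw [hcoeff]; exact one_ne_zero)),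
    monic_of_natDegree_le_of_coeff_eq_one m hle hcoeff⟩

theorem psiCharPoly_add_smul_vecMulVec (A : Matrix (Fin k × Fin m) (Fin k × Fin m) ℂ)
    (u w : Fin k × Fin m → ℂ) (τ : ℂ) :
    psiCharPoly k m (A + τ • vecMulVec u w) = psiCharPoly k m A
      + τ • (psiCharPoly k m (A + vecMulVec u w) - psiCharPoly k m A) := by
  have hsub : ∀ (g : Fin m → Fin k) (s : ℂ), (A + s • vecMulVec u w).submatrix
      (fun i => (g i, i)) (fun i => (g i, i)) = A.submatrix (fun i => (g i, i)) (fun i => (g i, i))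
        + s • vecMulVec (fun i => u (g i, i)) (fun i => w (g i, i)) := fun g s => by
    ext i j
    simp [vecMulVec_apply]
  have hsub₁ := fun g => hsub g 1
  simp only [one_smul] at hsub₁
  simp only [psiCharPoly, hsub, hsub₁, charpoly_add_smul_vecMulVec, sum_add_distrib, ← smul_sum,
    sum_sub_distrib, smul_add, smul_sub]
  module

theorem coeff_psiCharPoly_sub_add_vecMulVec (hm : 0 < m)
    (A : Matrix (Fin k × Fin m) (Fin k × Fin m) ℂ) (v : Fin k × Fin m → ℂ) :
    (psiCharPoly k m A - psiCharPoly k m (A + vecMulVec v (star v))).coeff (m - 1)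
      = (((k : ℝ) ^ m)⁻¹ * ∑ g : Fin m → Fin k, ∑ i, ‖v (g i, i)‖ ^ 2 : ℝ) := by
  have : Nonempty (Fin m) := ⟨⟨0, hm⟩⟩
  have htrace : ∀ M : Matrix (Fin m) (Fin m) ℂ, M.charpoly.coeff (m - 1) = -M.trace :=
    fun M => by rw [trace_eq_neg_charpoly_coeff, Fintype.card_fin, neg_neg]
  simp only [psiCharPoly, ← smul_sub, coeff_smul, ← sum_sub_distrib, finsetSum_coeff, coeff_sub,
    htrace, smul_eq_mul]
  push_cast
  congr 1
  refine sum_congr rfl fun g _ => ?_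
  simp [trace, vecMulVec_apply, Complex.mul_conj, Complex.normSq_eq_norm_sq, sum_add_distrib]

theorem sum_sum_norm_sq_pos {v : Fin k × Fin m → ℂ} (hv : v ≠ 0) :
    0 < ∑ g : Fin m → Fin k, ∑ i, ‖v (g i, i)‖ ^ 2 := by
  obtain ⟨p, hp⟩ := Function.ne_iff.mp hv
  refine sum_pos' (fun g _ => sum_nonneg fun i _ => by positivity)
    ⟨fun _ => p.1, mem_univ _, sum_pos' (fun i _ => by positivity)
      ⟨p.2, mem_univ _, pow_pos (norm_pos_iff.mpr hp) 2⟩⟩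

theorem exists_splits_map_eq_psiCharPoly (hk : 0 < k)
    {A : Matrix (Fin k × Fin m) (Fin k × Fin m) ℂ} (hA : A.IsHermitian) :
    ∃ q : ℝ[X], q.Splits ∧ q.map (algebraMap ℝ ℂ) = psiCharPoly k m A :=
  exists_splits_map_eq (isMonicOfDegree_psiCharPoly hk A).monic fun _ hz =>
    not_not.mp fun him => eval_psiCharPoly_ne_zero hk hA him hz

end PsiCharPoly

namespace Polynomial

/-- The largest real root of `p`; `0` if `p` has no real root or `p = 0`. -/
noncomputable def maxRealRoot (p : ℝ[X]) : ℝ := sSup {x | p.IsRoot x}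

theorem maxRoot_map (p : ℝ[X]) : maxRoot (p.map (algebraMap ℝ ℂ)) = p.maxRealRoot := by
  rw [maxRoot, maxRealRoot]
  congr 1
  ext x
  rw [Set.mem_ofPred_eq, Set.mem_ofPred_eq, eval_map_algebraMap, ← Complex.coe_algebraMap,
    aeval_algebraMap_apply_eq_algebraMap_eval, Complex.coe_algebraMap, Complex.ofReal_eq_zero,
    IsRoot]

variable {p : ℝ[X]}

theorem le_maxRealRoot (hp : p ≠ 0) {x : ℝ} (hx : p.IsRoot x) : x ≤ p.maxRealRoot :=
  le_csSup (finite_setOfPred_isRoot hp).bddAbove hx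

theorem isRoot_maxRealRoot (hp : p.Splits) (hdeg : 0 < p.natDegree) :
    p.IsRoot p.maxRealRoot := by
  have hp0 := ne_zero_of_natDegree_gt hdeg
  have hne : {x | p.IsRoot x}.Nonempty :=
    hp.exists_eval_eq_zero (by rw [degree_eq_natDegree hp0]; exact_mod_cast hdeg.ne')
  exact hne.csSup_mem (finite_setOfPred_isRoot hp0)

theorem pow_sub_maxRealRoot_le_eval (hp : p.Splits) (hmon : p.Monic) {x : ℝ}
    (hx : p.maxRealRoot ≤ x) : (x - p.maxRealRoot) ^ p.natDegree ≤ p.eval x := by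
  rw [hp.eval_eq_prod_roots_of_monic hmon, hp.natDegree_eq_card_roots, ← Multiset.prod_replicate,
    ← Multiset.map_const']
  refine Multiset.prod_map_le_prod_map₀ _ _ (fun _ _ => sub_nonneg.mpr hx) fun μ hμ => ?_
  have := le_maxRealRoot hmon.ne_zero ((mem_roots hmon.ne_zero).mp hμ)
  linarith

theorem abs_lt_of_isRoot_of_monic (hmon : p.Monic) {B : ℝ}
    (hB : ∀ i < p.natDegree, |p.coeff i| ≤ B) {x : ℝ} (hx : p.IsRoot x) : |x| < B + 1 := by
  have hB0 : 0 ≤ B := by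
    rcases Nat.eq_zero_or_pos p.natDegree with h | h
    · simp [hmon.natDegree_eq_zero.mp h] at hx
    · exact (abs_nonneg _).trans (hB 0 h)
  have hsup : (range p.natDegree).sup (fun i => ‖p.coeff i‖₊) ≤ B.toNNReal :=
    Finset.sup_le fun i hi => by
      rw [← NNReal.coe_le_coe, coe_nnnorm, Real.coe_toNNReal _ hB0]
      exact hB i (mem_range.mp hi)
  have hbound := hx.norm_lt_cauchyBound hmon.ne_zero
  rw [cauchyBound, hmon.leadingCoeff, nnnorm_one, div_one] at hbound
  have := NNReal.coe_lt_coe.mpr (hbound.trans_le (add_le_add_left hsup 1))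
  rw [NNReal.coe_add, coe_nnnorm, Real.coe_toNNReal _ hB0, NNReal.coe_one] at this
  rwa [← Real.norm_eq_abs]

section Pencil

variable {P Φ : ℝ[X]} {n : ℕ}

theorem IsMonicOfDegree.sub_C_mul (hP : P.IsMonicOfDegree n) (hΦ : Φ.natDegree < n) (t : ℝ) :
    (P - C t * Φ).IsMonicOfDegree n :=
  hP.sub ((natDegree_C_mul_le _ _).trans_lt hΦ)

theorem eval_sub_C_mul (t s x : ℝ) :
    (P - C s * Φ).eval x = (P - C t * Φ).eval x + (t - s) * Φ.eval x := by
  simp only [eval_sub, eval_mul, eval_C]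
  ring

theorem isRoot_maxRealRoot_sub_C_mul (hP : P.IsMonicOfDegree n) (hΦ : Φ.natDegree < n)
    (hsplit : ∀ t : ℝ, (P - C t * Φ).Splits) (t : ℝ) :
    (P - C t * Φ).IsRoot (P - C t * Φ).maxRealRoot :=
  isRoot_maxRealRoot (hsplit t) ((hP.sub_C_mul hΦ t).natDegree_eq ▸ (Nat.zero_le _).trans_lt hΦ)

theorem pow_le_mul_eval_of_maxRealRoot_add_le (hP : P.IsMonicOfDegree n) (hΦ : Φ.natDegree < n)
    (hsplit : ∀ t : ℝ, (P - C t * Φ).Splits) {t s ε : ℝ} (hε : 0 ≤ ε)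
    (h : (P - C t * Φ).maxRealRoot + ε ≤ (P - C s * Φ).maxRealRoot) :
    ε ^ n ≤ (s - t) * Φ.eval (P - C s * Φ).maxRealRoot := by
  have ht := hP.sub_C_mul hΦ t
  calc ε ^ n ≤ ((P - C s * Φ).maxRealRoot - (P - C t * Φ).maxRealRoot) ^ n :=
        pow_le_pow_left₀ hε (by linarith) _
    _ ≤ (P - C t * Φ).eval (P - C s * Φ).maxRealRoot := by
        rw [← ht.natDegree_eq]
        exact pow_sub_maxRealRoot_le_eval (hsplit t) ht.monic (by linarith)
    _ = (s - t) * Φ.eval (P - C s * Φ).maxRealRoot := by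
        rw [eval_sub_C_mul s, (isRoot_maxRealRoot_sub_C_mul hP hΦ hsplit s).eq_zero, zero_add]

theorem exists_abs_maxRealRoot_le (hP : P.IsMonicOfDegree n) (hΦ : Φ.natDegree < n)
    (hsplit : ∀ t : ℝ, (P - C t * Φ).Splits) (t₀ : ℝ) :
    ∃ K, ∀ s, |s - t₀| ≤ 1 → |(P - C s * Φ).maxRealRoot| ≤ K := by
  set B := ∑ i ∈ range n, (|P.coeff i| + (|t₀| + 1) * |Φ.coeff i|)
  refine ⟨B + 1, fun s hs => (abs_lt_of_isRoot_of_monic (hP.sub_C_mul hΦ s).monic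
    (fun i hi => ?_) (isRoot_maxRealRoot_sub_C_mul hP hΦ hsplit s)).le⟩
  rw [(hP.sub_C_mul hΦ s).natDegree_eq] at hi
  have hs' : |s| ≤ |t₀| + 1 := by
    have := abs_sub_abs_le_abs_sub s t₀
    linarith
  calc |(P - C s * Φ).coeff i| ≤ |P.coeff i| + (|t₀| + 1) * |Φ.coeff i| := by
        rw [coeff_sub, coeff_C_mul]
        refine (abs_sub _ _).trans (add_le_add le_rfl ?_)
        rw [abs_mul]
        exact mul_le_mul_of_nonneg_right hs' (abs_nonneg _)
    _ ≤ B := single_le_sum (f := fun i => |P.coeff i| + (|t₀| + 1) * |Φ.coeff i|)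
        (fun j _ => by positivity) (mem_range.mpr hi)

theorem continuous_maxRealRoot_sub_C_mul (hP : P.IsMonicOfDegree n) (hΦ : Φ.natDegree < n)
    (hsplit : ∀ t : ℝ, (P - C t * Φ).Splits) :
    Continuous fun t => (P - C t * Φ).maxRealRoot := by
  rw [Metric.continuous_iff]
  intro t₀ ε hε
  obtain ⟨K, hK⟩ := exists_abs_maxRealRoot_le hP hΦ hsplit t₀
  obtain ⟨L, hL⟩ := (isCompact_Icc (a := -K) (b := K)).exists_bound_of_continuousOn
    Φ.continuous.continuousOn
  have hL0 : 0 ≤ L := (norm_nonneg _).trans (hL _ (abs_le.mp (hK t₀ (by simp))))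
  have key : ∀ t s, |s - t₀| ≤ 1 →
      (P - C t * Φ).maxRealRoot + ε ≤ (P - C s * Φ).maxRealRoot →
      ε ^ n ≤ |s - t| * L := by
    intro t s hs h
    have hΦL := hL _ (abs_le.mp (hK s hs))
    rw [Real.norm_eq_abs] at hΦL
    calc ε ^ n ≤ (s - t) * Φ.eval (P - C s * Φ).maxRealRoot :=
          pow_le_mul_eval_of_maxRealRoot_add_le hP hΦ hsplit hε.le h
      _ ≤ |s - t| * |Φ.eval (P - C s * Φ).maxRealRoot| := by
          rw [← abs_mul]
          exact le_abs_self _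
      _ ≤ |s - t| * L := mul_le_mul_of_nonneg_left hΦL (abs_nonneg _)
  refine ⟨min 1 (ε ^ n / (L + 1)), by positivity, fun s hs => ?_⟩
  rw [Real.dist_eq, lt_min_iff, lt_div_iff₀ (by positivity)] at hs
  rw [Real.dist_eq, abs_sub_lt_iff]
  constructor <;> by_contra! h
  · have := key t₀ s hs.1.le (by linarith)
    nlinarith [abs_nonneg (s - t₀)]
  · have := key s t₀ (by simp) (by linarith)
    rw [abs_sub_comm] at this
    nlinarith [abs_nonneg (s - t₀)]

theorem exists_le_and_lt_maxRealRoot (hP : P.IsMonicOfDegree n) (hΦ : Φ.natDegree < n)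
    (hlc : 0 < Φ.leadingCoeff) (t x : ℝ) :
    ∃ T, t ≤ T ∧ x < (P - C T * Φ).maxRealRoot := by
  set x₁ := max x Φ.maxRealRoot + 1
  have hΦx₁ : 0 < Φ.eval x₁ := zero_lt_eval_of_roots_lt_of_leadingCoeff_nonneg
    (fun y hy => (le_maxRealRoot (leadingCoeff_ne_zero.mp hlc.ne') hy).trans_lt
      (by linarith [le_max_right x Φ.maxRealRoot])) hlc.le
  set T := max t (P.eval x₁ / Φ.eval x₁ + 1)
  have hneg : (P - C T * Φ).eval x₁ < 0 := by
    have : P.eval x₁ / Φ.eval x₁ < T := (lt_add_one _).trans_le (le_max_right _ _)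
    rw [div_lt_iff₀ hΦx₁] at this
    simp only [eval_sub, eval_mul, eval_C]
    linarith
  refine ⟨T, le_max_left _ _, ?_⟩
  by_contra! h
  have hmon := (hP.sub_C_mul hΦ T).monic
  have := zero_le_eval_of_roots_le_of_leadingCoeff_nonneg (x := x₁)
    (fun y hy => (le_maxRealRoot hmon.ne_zero hy).trans
      (h.trans (by linarith [le_max_left x Φ.maxRealRoot])))
    (by rw [hmon.leadingCoeff]; exact zero_le_one)
  linarith

theorem monotone_maxRealRoot_sub_C_mul (hP : P.IsMonicOfDegree n) (hΦ : Φ.natDegree < n)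
    (hsplit : ∀ t : ℝ, (P - C t * Φ).Splits) (hlc : 0 < Φ.leadingCoeff) :
    Monotone fun t => (P - C t * Φ).maxRealRoot := by
  set r := fun t => (P - C t * Φ).maxRealRoot
  have hcont : Continuous r := continuous_maxRealRoot_sub_C_mul hP hΦ hsplit
  intro t₁ t₂ h12
  by_contra! hlt
  obtain ⟨x, ⟨hx₂, hx₁⟩, hΦx⟩ : ∃ x ∈ Set.Ioo (r t₂) (r t₁), ¬Φ.IsRoot x :=
    ((Set.Ioo_infinite hlt).sdiff
      (finite_setOfPred_isRoot (leadingCoeff_ne_zero.mp hlc.ne'))).nonempty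
  obtain ⟨T, hT, hxT⟩ := exists_le_and_lt_maxRealRoot hP hΦ hlc t₂ x
  obtain ⟨a, ha, hra⟩ := intermediate_value_Icc' h12 hcont.continuousOn ⟨hx₂.le, hx₁.le⟩
  obtain ⟨b, hb, hrb⟩ := intermediate_value_Icc hT hcont.continuousOn ⟨hx₂.le, hxT.le⟩
  -- `Φ x ≠ 0`, so `x` is a root of `P - C t * Φ` for a single value of `t`
  have hab : a = b := by
    have ha0 : (P - C a * Φ).eval x = 0 := hra ▸ isRoot_maxRealRoot_sub_C_mul hP hΦ hsplit a
    have hb0 : (P - C b * Φ).eval x = 0 := hrb ▸ isRoot_maxRealRoot_sub_C_mul hP hΦ hsplit b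
    rw [eval_sub_C_mul a, ha0, zero_add] at hb0
    exact sub_eq_zero.mp ((mul_eq_zero.mp hb0).resolve_right hΦx)
  obtain rfl : a = t₂ := le_antisymm ha.2 (hab ▸ hb.1)
  exact hx₂.ne hra

end Pencil

end Polynomial

theorem exists_real_pencil_psiCharPoly {k m : ℕ} (hk : 0 < k) (hm : 0 < m)
    {A : Matrix (Fin k × Fin m) (Fin k × Fin m) ℂ} (hA : A.IsHermitian)
    {v : Fin k × Fin m → ℂ} (hv : v ≠ 0) :
    ∃ P Φ : ℝ[X], P.IsMonicOfDegree m ∧ Φ.natDegree < m ∧ 0 < Φ.leadingCoeff ∧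
      ∀ t : ℝ, (P - C t * Φ).Splits ∧ (P - C t * Φ).map (algebraMap ℝ ℂ)
        = psiCharPoly k m (A + (t : ℂ) • vecMulVec v (star v)) := by
  have hvv := (posSemidef_vecMulVec_self_star v).isHermitian
  obtain ⟨P, -, hP⟩ := exists_splits_map_eq_psiCharPoly hk hA
  obtain ⟨Q, -, hQ⟩ := exists_splits_map_eq_psiCharPoly hk (hA.add hvv)
  have hinj : Function.Injective (Polynomial.map (algebraMap ℝ ℂ)) :=
    map_injective _ (RingHom.injective _)
  have hmap : ∀ t : ℝ, (P - C t * (P - Q)).map (algebraMap ℝ ℂ)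
      = psiCharPoly k m (A + (t : ℂ) • vecMulVec v (star v)) := fun t => by
    rw [psiCharPoly_add_smul_vecMulVec, ← hP, ← hQ, smul_eq_C_mul]
    simp only [Polynomial.map_sub, Polynomial.map_mul, map_C, Complex.coe_algebraMap]
    ring
  have hcoeff : 0 < (P - Q).coeff (m - 1) := by
    have := coeff_psiCharPoly_sub_add_vecMulVec hm A v
    rw [← hP, ← hQ, ← Polynomial.map_sub, coeff_map, Complex.coe_algebraMap,
      Complex.ofReal_inj] at this
    rw [this]
    exact mul_pos (inv_pos.mpr (pow_pos (Nat.cast_pos.mpr hk) m)) (sum_sum_norm_sq_pos hv)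
  have hPm : P.IsMonicOfDegree m := (hP ▸ isMonicOfDegree_psiCharPoly hk _).of_map
  have hQm : Q.IsMonicOfDegree m := (hQ ▸ isMonicOfDegree_psiCharPoly hk _).of_map
  have hdeg : (P - Q).natDegree < m := hPm.natDegree_sub_lt hm.ne' hQm
  have hdeg' : (P - Q).natDegree = m - 1 := by
    have := le_natDegree_of_ne_zero hcoeff.ne'
    omega
  refine ⟨P, P - Q, hPm, hdeg, by rwa [leadingCoeff, hdeg'], fun t => ⟨?_, hmap t⟩⟩
  obtain ⟨R, hR, hRmap⟩ := exists_splits_map_eq_psiCharPoly hk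
    (hA.add (hvv.smul (Complex.conj_ofReal t)))
  rwa [hinj (hRmap.trans (hmap t).symm)] at hR

/-- The map `t ↦ maxroot ψ_{k,m}[A + t·vv*]` is continuous and monotone
nondecreasing. -/
theorem continuous_monotone_maxRoot_rankOne (k m : ℕ) (hk : 0 < k) (hm : 0 < m)
    (A : Matrix (Fin k × Fin m) (Fin k × Fin m) ℂ) (hA : A.IsHermitian)
    (v : Fin k × Fin m → ℂ) (hv : v ≠ 0) :
    Continuous (fun t : ℝ =>
        maxRoot (psiCharPoly k m (A + (t : ℂ) • Matrix.vecMulVec v (star v)))) ∧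
    Monotone (fun t : ℝ =>
        maxRoot (psiCharPoly k m (A + (t : ℂ) • Matrix.vecMulVec v (star v)))) := by
  obtain ⟨P, Φ, hP, hΦ, hlc, hpencil⟩ := exists_real_pencil_psiCharPoly hk hm hA hv
  have hmaxRoot : ∀ t : ℝ, maxRoot (psiCharPoly k m (A + (t : ℂ) • vecMulVec v (star v)))
      = (P - C t * Φ).maxRealRoot := fun t => by rw [← (hpencil t).2, maxRoot_map]
  simp only [hmaxRoot]
  exact ⟨continuous_maxRealRoot_sub_C_mul hP hΦ fun t => (hpencil t).1,
    monotone_maxRealRoot_sub_C_mul hP hΦ (fun t => (hpencil t).1) hlc⟩
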